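/- arXiv:2403.10886 — 9 statements merged into one kernel-verified Lean document; each statement's English description precedes it below -/
import Mathlib

section
/- Let H be an infinite-dimensional separable complex Hilbert space and X a closed subspace of H with both dim X and codim X infinite. Then there exists a closed subspace Q of H such that Q ∩ X^⊥ = 0 and Q^⊥ ∩ X^⊥ = 0, and both dim Q and codim Q are infinite. -/
open Submodule Topology

local notation "⟪" x ", " y "⟫" => @inner ℂ _ _ x y

/-- Any infinite-dimensional separable complex Hilbert space has a Hilbert basis
indexed by `ℕ`. -/
lemma exists_hilbertBasis_nat (E : Type*) [NormedAddCommGroup E] [InnerProductSpace ℂ E]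
    [CompleteSpace E] [TopologicalSpace.SeparableSpace E] (hE : ¬ FiniteDimensional ℂ E) :
    Nonempty (HilbertBasis ℕ ℂ E) := by
  obtain ⟨w, b, hb⟩ := exists_hilbertBasis ℂ E
  have hw : Orthonormal ℂ ((↑) : w → E) := hb ▸ b.orthonormal
  have hdist : ∀ i j : w, i ≠ j → (1 : ℝ) ≤ dist (i : E) (j : E) := by
    intro i j hij
    have h2 : ‖(i : E) - (j : E)‖ ^ 2 = 2 := by
      have := norm_sub_sq (𝕜 := ℂ) (i : E) (j : E)
      rw [hw.2 hij] at this
      simp only [hw.1 i, hw.1 j, map_zero] at this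
      rw [this]; norm_num
    have hnn : (0 : ℝ) ≤ ‖(i : E) - (j : E)‖ := norm_nonneg _
    rw [dist_eq_norm]
    nlinarith
  have hcount : Countable w := by
    apply Pairwise.countable_of_isOpen_disjoint
      (s := fun x : w => Metric.ball (x : E) (1 / 2))
    · intro i j hij
      apply Metric.ball_disjoint_ball
      linarith [hdist i j hij]
    · exact fun i => Metric.isOpen_ball
    · exact fun i => Metric.nonempty_ball.2 (by norm_num)
  have hinf : Infinite w := by
    rw [← not_finite_iff_infinite]
    intro hfin
    have hsfin : (Set.range ((↑) : w → E)).Finite := Set.finite_range _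
    haveI : FiniteDimensional ℂ (span ℂ (Set.range ((↑) : w → E))) :=
      FiniteDimensional.span_of_finite ℂ hsfin
    have hcl : IsClosed ((span ℂ (Set.range ((↑) : w → E)) : Submodule ℂ E) : Set E) :=
      Submodule.closed_of_finiteDimensional _
    have hdense := b.dense_span
    rw [hb] at hdense
    have htop : (span ℂ (Set.range ((↑) : w → E)) : Submodule ℂ E) = ⊤ := by
      rw [← hcl.submodule_topologicalClosure_eq, hdense]
    haveI : FiniteDimensional ℂ (⊤ : Submodule ℂ E) := htop ▸ inferInstance
    exact hE (Submodule.topEquiv (R := ℂ) (M := E)).finiteDimensional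
  haveI := hinf
  obtain ⟨hd⟩ := nonempty_denumerable w
  let e : ℕ ≃ w := (Denumerable.eqv w).symm
  have horth : Orthonormal ℂ (((↑) : w → E) ∘ e) := hw.comp e e.injective
  refine ⟨HilbertBasis.mk horth ?_⟩
  have hrange : Set.range (((↑) : w → E) ∘ e) = Set.range ((↑) : w → E) :=
    e.surjective.range_comp _
  rw [hrange]
  have hd2 := b.dense_span
  rw [hb] at hd2
  exact hd2.ge

/-- In an infinite-dimensional separable complex Hilbert space `H`,
for every closed subspace `X` with infinite dimension and infinite codimension,
there is a closed subspace `Q` with infinite dimension and infinite codimension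
such that `Q ⊓ Xᗮ = ⊥` and `Qᗮ ⊓ Xᗮ = ⊥`. -/
theorem stmt0 {H : Type} [NormedAddCommGroup H] [InnerProductSpace ℂ H]
    [CompleteSpace H] [TopologicalSpace.SeparableSpace H]
    (hH : ¬ FiniteDimensional ℂ H)
    (X : Submodule ℂ H) (hXc : IsClosed (X : Set H))
    (hXdim : ¬ FiniteDimensional ℂ X) (hXcodim : ¬ FiniteDimensional ℂ Xᗮ) :
    ∃ Q : Submodule ℂ H, IsClosed (Q : Set H) ∧
      Q ⊓ Xᗮ = ⊥ ∧ Qᗮ ⊓ Xᗮ = ⊥ ∧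
      ¬ FiniteDimensional ℂ Q ∧ ¬ FiniteDimensional ℂ Qᗮ := by
  haveI : CompleteSpace X := hXc.completeSpace_coe
  obtain ⟨bX⟩ := exists_hilbertBasis_nat X hXdim
  obtain ⟨bY⟩ := exists_hilbertBasis_nat Xᗮ hXcodim
  let U : X ≃ₗᵢ[ℂ] Xᗮ := bX.repr.trans bY.repr.symm
  let f : X →ₗ[ℂ] H := X.subtype + Xᗮ.subtype.comp (U.toLinearEquiv : X →ₗ[ℂ] Xᗮ)
  have hf_apply : ∀ x : X, f x = (x : H) + (U x : H) := fun x => rfl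
  -- inner product facts
  have hXY : ∀ (x : X) (y : Xᗮ), ⟪(x : H), (y : H)⟫ = 0 := fun x y =>
    Submodule.inner_right_of_mem_orthogonal x.2 y.2
  have hYX : ∀ (y : Xᗮ) (x : X), ⟪(y : H), (x : H)⟫ = 0 := fun y x =>
    Submodule.inner_left_of_mem_orthogonal x.2 y.2
  -- norm of f x
  have hnorm : ∀ x : X, ‖f x‖ ^ 2 = 2 * ‖x‖ ^ 2 := by
    intro x
    rw [hf_apply, norm_add_sq (𝕜 := ℂ), hXY x (U x)]
    have h1 : ‖(x : H)‖ = ‖x‖ := rfl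
    have h2 : ‖(U x : H)‖ = ‖x‖ := by
      rw [show ‖(U x : H)‖ = ‖U x‖ from rfl, U.norm_map]
    rw [h1, h2]; simp; ring
  have hle : ∀ x : X, ‖x‖ ≤ ‖f x‖ := by
    intro x
    have := hnorm x
    have h1 : (0:ℝ) ≤ ‖x‖ := norm_nonneg _
    have h2 : (0:ℝ) ≤ ‖f x‖ := norm_nonneg _
    nlinarith
  have hinj : Function.Injective f := by
    intro a b hab
    have : ‖a - b‖ ≤ ‖f (a - b)‖ := hle _
    rw [map_sub, hab, sub_self, norm_zero] at this
    have := norm_nonneg (a - b)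
    have h0 : ‖a - b‖ = 0 := le_antisymm ‹‖a - b‖ ≤ 0› this
    rwa [norm_eq_zero, sub_eq_zero] at h0
  set Q : Submodule ℂ H := LinearMap.range f with hQ
  have hQmem : ∀ v, v ∈ Q ↔ ∃ x : X, f x = v := fun v => LinearMap.mem_range
  -- closedness
  have hQc : IsClosed (Q : Set H) := by
    have hanti : AntilipschitzWith 1 f := by
      refine AntilipschitzWith.of_le_mul_dist fun a b => ?_
      rw [dist_eq_norm, dist_eq_norm, ← map_sub, NNReal.coe_one, one_mul]
      exact hle (a - b)
    have hlip : LipschitzWith 2 f := by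
      refine LipschitzWith.of_dist_le_mul fun a b => ?_
      rw [dist_eq_norm, dist_eq_norm, ← map_sub]
      have := hnorm (a - b)
      have h1 : (0:ℝ) ≤ ‖a - b‖ := norm_nonneg _
      have h2 : (0:ℝ) ≤ ‖f (a - b)‖ := norm_nonneg _
      have : ‖f (a-b)‖ ≤ 2 * ‖a - b‖ := by nlinarith
      simpa using this
    have := hanti.isClosed_range hlip.uniformContinuous
    rwa [show Set.range f = (Q : Set H) from (LinearMap.coe_range f).symm] at this
  refine ⟨Q, hQc, ?_, ?_, ?_, ?_⟩
  · -- Q ⊓ Xᗮ = ⊥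
    rw [eq_bot_iff]
    rintro v ⟨hvQ, hvX⟩
    obtain ⟨x, rfl⟩ := (hQmem _).1 hvQ
    have hx : (x : H) ∈ Xᗮ := by
      have : (x : H) = f x - (U x : H) := by rw [hf_apply, add_sub_cancel_right]
      rw [this]
      exact Xᗮ.sub_mem hvX (U x).2
    have hx0 : (x : H) = 0 := by
      have := (Submodule.orthogonal_disjoint X).le_bot ⟨x.2, hx⟩
      simpa using this
    have : x = 0 := Subtype.coe_injective hx0
    rw [this, map_zero]
    exact Submodule.zero_mem ⊥
  · -- Qᗮ ⊓ Xᗮ = ⊥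
    rw [eq_bot_iff]
    rintro v ⟨hvQ, hvX⟩
    obtain ⟨z, hz⟩ := U.surjective ⟨v, hvX⟩
    have h1 : ⟪f z, v⟫ = 0 := hvQ _ ((hQmem _).2 ⟨z, rfl⟩)
    rw [hf_apply, inner_add_left, Submodule.inner_right_of_mem_orthogonal z.2 hvX, zero_add,
      hz] at h1
    have h2 : ((⟨v, hvX⟩ : Xᗮ) : H) = v := rfl
    rw [h2, inner_self_eq_zero] at h1
    rw [h1]
    exact Submodule.zero_mem ⊥
  · -- infinite dim
    intro hfin
    exact hXdim ((LinearEquiv.ofInjective f hinj).symm.finiteDimensional)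
  · -- infinite codim
    intro hfin
    let g : X →ₗ[ℂ] H := X.subtype - Xᗮ.subtype.comp (U.toLinearEquiv : X →ₗ[ℂ] Xᗮ)
    have hg_apply : ∀ x : X, g x = (x : H) - (U x : H) := fun x => rfl
    have hginj : Function.Injective g := by
      intro a b hab
      have h0 : g (a - b) = 0 := by rw [map_sub, hab, sub_self]
      rw [hg_apply, sub_eq_zero] at h0
      have hmem : ((a - b : X) : H) ∈ Xᗮ := h0 ▸ (U (a - b)).2
      have := (Submodule.orthogonal_disjoint X).le_bot ⟨(a - b : X).2, hmem⟩
      have h1 : ((a - b : X) : H) = 0 := by simpa using this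
      have : (a - b : X) = 0 := Subtype.coe_injective h1
      rwa [sub_eq_zero] at this
    have hrange_le : LinearMap.range g ≤ Qᗮ := by
      rintro _ ⟨z, rfl⟩
      rw [Submodule.mem_orthogonal]
      rintro _ hu
      obtain ⟨x, rfl⟩ := (hQmem _).1 hu
      rw [hf_apply, hg_apply, inner_add_left, inner_sub_right, inner_sub_right]
      have e1 : ⟪(x : H), (U z : H)⟫ = 0 := hXY x (U z)
      have e2 : ⟪(U x : H), (z : H)⟫ = 0 := hYX (U x) z
      have e3 : ⟪(U x : H), (U z : H)⟫ = ⟪(x : H), (z : H)⟫ := by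
        have h4 : ⟪(U x : H), (U z : H)⟫ = ⟪U x, U z⟫ := rfl
        have h5 : ⟪(x : H), (z : H)⟫ = ⟪x, z⟫ := rfl
        rw [h4, h5, U.inner_map_map]
      rw [e1, e2, e3]
      ring
    haveI : FiniteDimensional ℂ (LinearMap.range g) :=
      Submodule.finiteDimensional_of_le hrange_le
    exact hXdim ((LinearEquiv.ofInjective g hginj).symm.finiteDimensional)
end

section
/- Let H be a non-separable complex Hilbert space and X a closed subspace whose Hilbert dimension is strictly less than that of H. Then there is no closed subspace Q of H such that both Q ∩ X^⊥ = 0 and Q^⊥ ∩ X^⊥ = 0. -/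
/-!
Let `b` be a Hilbert basis of `X`. If `Q ⊓ Xᗮ = ⊥` and `Qᗮ ⊓ Xᗮ = ⊥`, the projections of the
`b i` onto `Q` and onto `Qᗮ` form a total family in `H`: a vector orthogonal to all of them has
both components `P_Q x`, `P_Qᗮ x` orthogonal to `X`, hence zero. Every vector of a total family
is non-orthogonal to only countably many vectors of an orthonormal basis of `H`, so
`dim H ≤ 2 · dim X · ℵ₀`. Non-separability makes `dim H` uncountable, and the bound contradicts
`dim X < dim H`.
-/

open Cardinal Submodule

universe u

section

variable {𝕜 E : Type*} [RCLike 𝕜] [NormedAddCommGroup E] [InnerProductSpace 𝕜 E]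

local notation "⟪" x ", " y "⟫" => @inner 𝕜 _ _ x y

theorem Orthonormal.countable_inner_ne_zero {ι : Type*} {v : ι → E} (hv : Orthonormal 𝕜 v)
    (x : E) : {i | ⟪v i, x⟫ ≠ 0}.Countable :=
  (hv.inner_products_summable (x := x)).countable_support.mono fun i hi => by
    simpa using hi

theorem Orthonormal.mk_le_mul_aleph0_of_total {ι J : Type u} {v : ι → E}
    (hv : Orthonormal 𝕜 v) (w : J → E) (hw : ∀ x, (∀ j, ⟪w j, x⟫ = 0) → x = 0) :
    #ι ≤ #J * ℵ₀ := by
  have hsupp : ∀ i, ∃ j, ⟪v i, w j⟫ ≠ 0 := by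
    intro i
    by_contra! h
    exact hv.ne_zero i (hw (v i) fun j => inner_eq_zero_symm.mp (h j))
  choose j hj using hsupp
  let S : J → Set ι := fun j' => {i | ⟪v i, w j'⟫ ≠ 0}
  calc #ι ≤ #(Σ j', S j') :=
        mk_le_of_injective (f := fun i => ⟨j i, i, hj i⟩) fun i i' h => congr_arg (·.2.1) h
    _ = sum fun j' => #(S j') := mk_sigma _
    _ ≤ sum fun _ : J => ℵ₀ :=
        sum_le_sum _ _ fun j' => mk_le_aleph0_iff.mpr (hv.countable_inner_ne_zero (w j')).to_subtype
    _ = #J * ℵ₀ := sum_const' _ _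

theorem HilbertBasis.aleph0_lt_mk_of_not_separableSpace {ι : Type*} (b : HilbertBasis ι 𝕜 E)
    (hE : ¬ TopologicalSpace.SeparableSpace E) : ℵ₀ < #ι := by
  by_contra! hle
  have : Countable ι := mk_le_aleph0_iff.mp hle
  apply hE
  rw [← TopologicalSpace.isSeparable_univ_iff, ← top_coe (R := 𝕜), ← b.dense_span,
    topologicalClosure_coe]
  exact (Set.countable_range b).isSeparable.span.closure

theorem HilbertBasis.mem_orthogonal_of_forall_inner_eq_zero {ι : Type*} {X : Submodule 𝕜 E}
    (b : HilbertBasis ι 𝕜 X) {y : E} (hy : ∀ i, ⟪(b i : E), y⟫ = 0) : y ∈ Xᗮ := by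
  intro x hx
  have hsum := (innerSL 𝕜 y).hasSum (X.subtypeL.hasSum (b.hasSum_repr ⟨x, hx⟩))
  have hterm : ∀ i, innerSL 𝕜 y (X.subtypeL (b.repr ⟨x, hx⟩ i • b i)) = 0 := fun i => by
    simp [inner_eq_zero_symm.mp (hy i)]
  simp only [hterm] at hsum
  exact inner_eq_zero_symm.mp (hasSum_zero.unique hsum).symm

theorem Submodule.starProjection_eq_zero_of_inf_orthogonal_eq_bot {ι : Type*}
    {K X : Submodule 𝕜 E} [K.HasOrthogonalProjection] (hK : K ⊓ Xᗮ = ⊥)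
    (b : HilbertBasis ι 𝕜 X) {x : E} (hx : ∀ i, ⟪K.starProjection (b i), x⟫ = 0) :
    K.starProjection x = 0 := by
  have hX : K.starProjection x ∈ Xᗮ := b.mem_orthogonal_of_forall_inner_eq_zero fun i => by
    rw [← inner_starProjection_left_eq_right, hx i]
  simpa [hK] using mem_inf.mpr ⟨K.starProjection_apply_mem x, hX⟩

theorem Submodule.eq_zero_of_inner_starProjection_hilbertBasis_eq_zero {ι : Type*}
    {K X : Submodule 𝕜 E} [K.HasOrthogonalProjection] (hK : K ⊓ Xᗮ = ⊥) (hK' : Kᗮ ⊓ Xᗮ = ⊥)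
    (b : HilbertBasis ι 𝕜 X) {x : E}
    (hx : ∀ j, ⟪Sum.elim (fun i => K.starProjection (b i)) (fun i => Kᗮ.starProjection (b i)) j,
      x⟫ = 0) : x = 0 := by
  rw [← K.starProjection_add_starProjection_orthogonal x,
    starProjection_eq_zero_of_inf_orthogonal_eq_bot hK b fun i => hx (.inl i),
    starProjection_eq_zero_of_inf_orthogonal_eq_bot hK' b fun i => hx (.inr i), add_zero]

end

theorem stmt3_general {H : Type} [NormedAddCommGroup H] [InnerProductSpace ℂ H]
    [CompleteSpace H] (hH : ¬ TopologicalSpace.SeparableSpace H)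
    (X : Submodule ℂ H)
    (hdim : ∃ (ι κ : Type) (_ : HilbertBasis ι ℂ X) (_ : HilbertBasis κ ℂ H),
      Cardinal.mk ι < Cardinal.mk κ) :
    ¬ ∃ Q : Submodule ℂ H, IsClosed (Q : Set H) ∧
        Q ⊓ Xᗮ = ⊥ ∧ Qᗮ ⊓ Xᗮ = ⊥ := by
  rintro ⟨Q, hQc, hQ, hQ'⟩
  obtain ⟨ι, κ, b, c, hlt⟩ := hdim
  have : CompleteSpace Q := hQc.completeSpace_coe
  have hκ : ℵ₀ < #κ := c.aleph0_lt_mk_of_not_separableSpace hH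
  have hle : #κ ≤ #(ι ⊕ ι) * ℵ₀ := c.orthonormal.mk_le_mul_aleph0_of_total _ fun _ hx =>
    Q.eq_zero_of_inner_starProjection_hilbertBasis_eq_zero hQ hQ' b hx
  have hsum : #(ι ⊕ ι) < #κ := by
    simpa only [mk_sum, lift_id] using add_lt_of_lt hκ.le hlt hlt
  exact hle.not_gt (mul_lt_of_lt hκ.le hsum hκ)

/-- If `H` is a non-separable complex Hilbert space and `X` is a closed
subspace whose Hilbert dimension is strictly smaller than that of `H`, then there is
no closed subspace `Q` with `Q ⊓ Xᗮ = ⊥` and `Qᗮ ⊓ Xᗮ = ⊥`. -/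
theorem stmt3 {H : Type} [NormedAddCommGroup H] [InnerProductSpace ℂ H]
    [CompleteSpace H] (hH : ¬ TopologicalSpace.SeparableSpace H)
    (X : Submodule ℂ H) (hXc : IsClosed (X : Set H))
    (hdim : ∃ (ι κ : Type) (_ : HilbertBasis ι ℂ X) (_ : HilbertBasis κ ℂ H),
      Cardinal.mk ι < Cardinal.mk κ) :
    ¬ ∃ Q : Submodule ℂ H, IsClosed (Q : Set H) ∧
        Q ⊓ Xᗮ = ⊥ ∧ Qᗮ ⊓ Xᗮ = ⊥ :=
  stmt3_general hH X hdim
end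

section
/- Let H be an infinite-dimensional complex Hilbert space and f : G_∞(H) → G_∞(H) a map sending every pair of subspaces to an equivalent pair (i.e., for all X, Y there is a linear isometry L with {f(X), f(Y)} = {L(X), L(Y)}). Then f preserves orthogonality in both directions: X ⊥ Y if and only if f(X) ⊥ f(Y). -/
variable {H : Type} [NormedAddCommGroup H] [InnerProductSpace ℂ H] [CompleteSpace H]

/-- Membership in the Grassmannian `G_∞(H)`: closed subspaces whose dimension and
codimension are both infinite. -/
def inGinf (X : Submodule ℂ H) : Prop :=
  IsClosed (X : Set H) ∧ ¬ FiniteDimensional ℂ X ∧ ¬ FiniteDimensional ℂ Xᗮ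

/-- `f` sends every pair of subspaces of `G_∞(H)` to an equivalent pair: some linear
isometry of `H` maps one (unordered) pair onto the other. -/
def SendsPairsToEquiv (f : Submodule ℂ H → Submodule ℂ H) : Prop :=
  ∀ X Y : Submodule ℂ H, inGinf X → inGinf Y →
    ∃ L : H →ₗᵢ[ℂ] H,
      ({f X, f Y} : Set (Submodule ℂ H)) = {X.map L.toLinearMap, Y.map L.toLinearMap}


lemma map_isOrtho_iff (L : H →ₗᵢ[ℂ] H) (X Y : Submodule ℂ H) :
    (X.map L.toLinearMap).IsOrtho (Y.map L.toLinearMap) ↔ X.IsOrtho Y := by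
  simp only [Submodule.isOrtho_iff_inner_eq]
  constructor
  · intro h u hu v hv
    have := h (L u) (Submodule.mem_map_of_mem hu) (L v) (Submodule.mem_map_of_mem hv)
    simpa [LinearIsometry.inner_map_map] using this
  · rintro h _ ⟨u, hu, rfl⟩ _ ⟨v, hv, rfl⟩
    simpa [LinearIsometry.inner_map_map] using h u hu v hv

/-- a map of `G_∞(H)` sending every pair of subspaces to an equivalent
pair preserves orthogonality in both directions. -/
theorem stmt5 (hH : ¬ FiniteDimensional ℂ H)
    (f : Submodule ℂ H → Submodule ℂ H)
    (hf : ∀ X, inGinf X → inGinf (f X))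
    (hpair : SendsPairsToEquiv f) :
    ∀ X Y : Submodule ℂ H, inGinf X → inGinf Y →
      (X.IsOrtho Y ↔ (f X).IsOrtho (f Y)) := by
  intro X Y hX hY
  obtain ⟨L, hL⟩ := hpair X Y hX hY
  rcases Set.pair_eq_pair_iff.mp hL with ⟨h1, h2⟩ | ⟨h1, h2⟩
  · rw [h1, h2, map_isOrtho_iff]
  · rw [h1, h2, map_isOrtho_iff, Submodule.isOrtho_comm]
end

section
/- Let H be an infinite-dimensional complex Hilbert space and f : G_∞(H) → G_∞(H) a map such that for all X, Y in G_∞(H) there exists a linear isometry L : H → H with {f(X), f(Y)} = {L(X), L(Y)}. Then f preserves inclusion in both directions: for all X, Y in G_∞(H), X ⊆ Y if and only if f(X) ⊆ f(Y). -/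
/-!
An isometry preserves orthogonality in both directions, so by the pair condition `f` does too.
A closed `Y` consists of the vectors orthogonal to `Yᗮ`; hence `f X ≤ f Y` gives `f Yᗮ ⟂ f X`,
so `Yᗮ ⟂ X`, i.e. `X ≤ Y`. Conversely, if `X ≤ Y`, the isometry `L` of the pair condition either
keeps the order, and `f X = L X ≤ L Y = f Y`, or swaps it, and then `f Y ≤ f X` forces `Y ≤ X`.
-/

variable {H : Type} [NormedAddCommGroup H] [InnerProductSpace ℂ H] [CompleteSpace H]

section IsOrtho

variable {𝕜 E F : Type*} [RCLike 𝕜] [NormedAddCommGroup E] [InnerProductSpace 𝕜 E]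
  [NormedAddCommGroup F] [InnerProductSpace 𝕜 F]

theorem LinearIsometry.isOrtho_map_iff (L : E →ₗᵢ[𝕜] F) {U V : Submodule 𝕜 E} :
    U.map L.toLinearMap ⟂ V.map L.toLinearMap ↔ U ⟂ V := by
  refine ⟨fun h ↦ Submodule.isOrtho_iff_inner_eq.mpr fun u hu v hv ↦ ?_, Submodule.IsOrtho.map L⟩
  rw [← L.inner_map_map]
  exact h.inner_eq (Submodule.mem_map_of_mem hu) (Submodule.mem_map_of_mem hv)

theorem Submodule.orthogonal_isOrtho_iff_le [CompleteSpace E] {X Y : Submodule 𝕜 E}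
    (hX : IsClosed (X : Set E)) : Xᗮ ⟂ Y ↔ Y ≤ X := by
  rw [Submodule.isOrtho_comm, Submodule.isOrtho_iff_le, X.orthogonal_orthogonal_eq_closure,
    hX.submodule_topologicalClosure_eq]

end IsOrtho

section Ginf

variable {E : Type} [NormedAddCommGroup E] [InnerProductSpace ℂ E]

theorem inGinf.orthogonal [CompleteSpace E] {X : Submodule ℂ E} (hX : inGinf X) :
    inGinf Xᗮ := by
  have : CompleteSpace X := hX.1.completeSpace_coe
  refine ⟨X.isClosed_orthogonal, hX.2.2, ?_⟩
  rw [X.orthogonal_orthogonal]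
  exact hX.2.1

namespace SendsPairsToEquiv

variable {f : Submodule ℂ E → Submodule ℂ E} (hpair : SendsPairsToEquiv f)
include hpair

theorem isOrtho_iff {X Z : Submodule ℂ E} (hX : inGinf X) (hZ : inGinf Z) :
    f X ⟂ f Z ↔ X ⟂ Z := by
  obtain ⟨L, hL⟩ := hpair X Z hX hZ
  rcases Set.pair_eq_pair_iff.mp hL with ⟨hfX, hfZ⟩ | ⟨hfX, hfZ⟩
  · rw [hfX, hfZ, L.isOrtho_map_iff]
  · rw [hfX, hfZ, L.isOrtho_map_iff, Submodule.isOrtho_comm]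

theorem le_of_map_le [CompleteSpace E] {X Y : Submodule ℂ E} (hX : inGinf X) (hY : inGinf Y)
    (hle : f X ≤ f Y) : X ≤ Y := by
  have hfY : f Yᗮ ⟂ f Y := (hpair.isOrtho_iff hY.orthogonal hY).mpr Y.isOrtho_orthogonal_left
  have hYX : Yᗮ ⟂ X := (hpair.isOrtho_iff hY.orthogonal hX).mp (hfY.mono_right hle)
  exact (Submodule.orthogonal_isOrtho_iff_le hY.1).mp hYX

end SendsPairsToEquiv

end Ginf

theorem stmt6_general
    (f : Submodule ℂ H → Submodule ℂ H)
    (hpair : SendsPairsToEquiv f) :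
    ∀ X Y : Submodule ℂ H, inGinf X → inGinf Y → (X ≤ Y ↔ f X ≤ f Y) := by
  intro X Y hX hY
  refine ⟨fun hle ↦ ?_, hpair.le_of_map_le hX hY⟩
  obtain ⟨L, hL⟩ := hpair X Y hX hY
  rcases Set.pair_eq_pair_iff.mp hL with ⟨hfX, hfY⟩ | ⟨hfX, hfY⟩
  · rw [hfX, hfY]
    exact Submodule.map_mono hle
  · have hYX : Y ≤ X := hpair.le_of_map_le hY hX (by rw [hfX, hfY]; exact Submodule.map_mono hle)
    rw [le_antisymm hle hYX]

/-- a map of `G_∞(H)` sending every pair of subspaces to an equivalent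
pair preserves inclusion in both directions. -/
theorem stmt6 (hH : ¬ FiniteDimensional ℂ H)
    (f : Submodule ℂ H → Submodule ℂ H)
    (hf : ∀ X, inGinf X → inGinf (f X))
    (hpair : SendsPairsToEquiv f) :
    ∀ X Y : Submodule ℂ H, inGinf X → inGinf Y → (X ≤ Y ↔ f X ≤ f Y) :=
  stmt6_general f hpair
end

section
/- Let H be an infinite-dimensional complex Hilbert space and X ⊊ Y closed subspaces of infinite dimension and infinite codimension. Then there exists a closed subspace Z of H with infinite dimension and infinite codimension such that Z is orthogonal to X and Z is not orthogonal to Y. -/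
variable {H : Type} [NormedAddCommGroup H] [InnerProductSpace ℂ H] [CompleteSpace H]

theorem Submodule.not_isOrtho_orthogonal_of_lt {𝕜 E : Type*} [RCLike 𝕜] [NormedAddCommGroup E]
    [InnerProductSpace 𝕜 E] {X Y : Submodule 𝕜 E} [X.HasOrthogonalProjection] (hXY : X < Y) :
    ¬ Xᗮ.IsOrtho Y := by
  rw [Submodule.isOrtho_comm, Submodule.isOrtho_iff_le, Submodule.orthogonal_orthogonal]
  exact hXY.not_ge

theorem inGinf_orthogonal {X : Submodule ℂ H} (hX : inGinf X) : inGinf Xᗮ := by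
  obtain ⟨hXc, hXi, hXci⟩ := hX
  have : CompleteSpace X := hXc.completeSpace_coe
  exact ⟨Submodule.isClosed_orthogonal X, hXci, by rwa [Submodule.orthogonal_orthogonal]⟩

theorem stmt7_general
    (X Y : Submodule ℂ H) (hX : inGinf X) (hXY : X < Y) :
    ∃ Z : Submodule ℂ H, inGinf Z ∧ Z.IsOrtho X ∧ ¬ Z.IsOrtho Y := by
  have : CompleteSpace X := hX.1.completeSpace_coe
  exact ⟨Xᗮ, inGinf_orthogonal hX, X.isOrtho_orthogonal_left,
    Submodule.not_isOrtho_orthogonal_of_lt hXY⟩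

/-- for `X ⊊ Y` in `G_∞(H)` there exists `Z ∈ G_∞(H)` orthogonal to
`X` but not orthogonal to `Y`. -/
theorem stmt7 (hH : ¬ FiniteDimensional ℂ H)
    (X Y : Submodule ℂ H) (hX : inGinf X) (hY : inGinf Y) (hXY : X < Y) :
    ∃ Z : Submodule ℂ H, inGinf Z ∧ Z.IsOrtho X ∧ ¬ Z.IsOrtho Y :=
  stmt7_general X Y hX hXY
end

section
/- Let H be an infinite-dimensional complex Hilbert space and f : G_∞(H) → G_∞(H) a map sending every pair of subspaces to an equivalent pair. Then for all X, Y ∈ G_∞(H) with Y ⊆ X, the codimension of Y in X equals the codimension of f(Y) in f(X). -/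
/-!
For `Y ≤ X` some linear isometry `L` carries `(X, Y)` either to `(f X, f Y)` or to `(f Y, f X)`.
In the first case `L` maps `Yᗮ ⊓ X` isometrically onto `(f Y)ᗮ ⊓ f X`, and the cardinality of a
Hilbert basis is an isometry invariant. The second case gives `f X ≤ f Y`, which is impossible
unless `X = Y`: since `f` preserves comparability and disjointness of pairs, it preserves inclusion.
-/

variable {H : Type} [NormedAddCommGroup H] [InnerProductSpace ℂ H] [CompleteSpace H]

open Cardinal Submodule
open scoped InnerProductSpace

section HilbertDimension

universe u

variable {𝕜 E F : Type*} [RCLike 𝕜] [NormedAddCommGroup E] [InnerProductSpace 𝕜 E]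
  [NormedAddCommGroup F] [InnerProductSpace 𝕜 F]

/- Every `c k` has a nonzero coefficient on some `b i`, and by Bessel's inequality each `b i`
has nonzero coefficients on only countably many `c k`. -/
theorem HilbertBasis.mk_le_mk_of_infinite {ι κ : Type u} [Infinite ι] (b : HilbertBasis ι 𝕜 E)
    (c : HilbertBasis κ 𝕜 E) : #κ ≤ #ι := by
  have hmeet : ∀ k, ∃ i, ⟪c k, b i⟫_𝕜 ≠ 0 := by
    intro k
    by_contra! h
    refine c.orthonormal.ne_zero k (b.repr.map_eq_zero_iff.1 (lp.ext (funext fun i => ?_)))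
    simpa [b.repr_apply_apply] using inner_eq_zero_symm.1 (h i)
  choose g hg using hmeet
  have hfiber : ∀ i, #(g ⁻¹' {i}) ≤ ℵ₀ := by
    intro i
    refine mk_le_aleph0_iff.2 (Set.Countable.to_subtype ?_)
    refine (c.orthonormal.inner_products_summable (x := b i)).countable_support.mono ?_
    rintro k rfl
    simpa using hg k
  calc #κ ≤ #ι * ℵ₀ := mk_le_mk_mul_of_mk_preimage_le g hfiber
    _ = #ι := mk_mul_aleph0_eq

theorem HilbertBasis.infinite_of_not_finiteDimensional {ι : Type*} (b : HilbertBasis ι 𝕜 E)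
    (hE : ¬ FiniteDimensional 𝕜 E) : Infinite ι := by
  by_contra h
  have : Fintype ι := @Fintype.ofFinite ι (not_infinite_iff_finite.1 h)
  exact hE (.of_basis b.toOrthonormalBasis.toBasis)

theorem HilbertBasis.mk_eq_mk {ι κ : Type u} (b : HilbertBasis ι 𝕜 E) (c : HilbertBasis κ 𝕜 E) :
    #ι = #κ := by
  by_cases hE : FiniteDimensional 𝕜 E
  · have := b.orthonormal.linearIndependent.finite
    have := c.orthonormal.linearIndependent.finite
    cases nonempty_fintype ι
    cases nonempty_fintype κ
    exact mk_eq_mk_of_basis' b.toOrthonormalBasis.toBasis c.toOrthonormalBasis.toBasis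
  · have := b.infinite_of_not_finiteDimensional hE
    have := c.infinite_of_not_finiteDimensional hE
    exact le_antisymm (c.mk_le_mk_of_infinite b) (b.mk_le_mk_of_infinite c)

theorem HilbertBasis.mk_eq_mk_of_map {ι κ : Type u} (L : E →ₗᵢ[𝕜] F) {S : Submodule 𝕜 E}
    (b : HilbertBasis ι 𝕜 S) (c : HilbertBasis κ 𝕜 (S.map L.toLinearMap)) : #ι = #κ :=
  let e := LinearIsometryEquiv.ofSurjective (L.submoduleMap S)
    (L.toLinearMap.submoduleMap_surjective S)
  (HilbertBasis.ofRepr (e.symm.trans b.repr)).mk_eq_mk c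

end HilbertDimension

section Orthogonal

variable {𝕜 E F : Type*} [RCLike 𝕜] [NormedAddCommGroup E] [InnerProductSpace 𝕜 E]
  [NormedAddCommGroup F] [InnerProductSpace 𝕜 F]

theorem Submodule.map_orthogonal_inf (L : E →ₗᵢ[𝕜] F) (A B : Submodule 𝕜 E) :
    (Aᗮ ⊓ B).map L.toLinearMap = (A.map L.toLinearMap)ᗮ ⊓ B.map L.toLinearMap := by
  rw [map_inf _ L.injective, map_orthogonal, inf_assoc, inf_eq_right.2 LinearMap.map_le_range]

theorem Orthonormal.not_finiteDimensional_of_forall_mem {ι : Type*} [Infinite ι] {v : ι → E}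
    (hv : Orthonormal 𝕜 v) {p : Submodule 𝕜 E} (hp : ∀ i, v i ∈ p) :
    ¬ FiniteDimensional 𝕜 p := fun _ => by
  have hli : LinearIndependent 𝕜 fun i => (⟨v i, hp i⟩ : p) :=
    .of_comp p.subtype hv.linearIndependent
  have := hli.finite
  exact not_finite ι

theorem Submodule.exists_orthonormal_nat_of_not_finiteDimensional {p : Submodule 𝕜 E}
    [CompleteSpace p] (hp : ¬ FiniteDimensional 𝕜 p) :
    ∃ v : ℕ → E, Orthonormal 𝕜 v ∧ ∀ n, v n ∈ p := by
  obtain ⟨w, b, -⟩ := exists_hilbertBasis 𝕜 p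
  have := b.infinite_of_not_finiteDimensional hp
  let g := Infinite.natEmbedding w
  exact ⟨fun n => b (g n), (p.subtypeₗᵢ.orthonormal_comp_iff.2 b.orthonormal).comp g g.injective,
    fun n => (b (g n)).2⟩

/- Split an orthonormal sequence of `Y` into its even and odd terms. -/
theorem Submodule.exists_le_not_finiteDimensional_orthogonal_inf {Y : Submodule 𝕜 E}
    [CompleteSpace Y] (hY : ¬ FiniteDimensional 𝕜 Y) :
    ∃ P ≤ Y, ¬ FiniteDimensional 𝕜 P ∧ ¬ FiniteDimensional 𝕜 ↥(Pᗮ ⊓ Y) := by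
  obtain ⟨v, hv, hvY⟩ := exists_orthonormal_nat_of_not_finiteDimensional hY
  have heven : Function.Injective fun n : ℕ => 2 * n := fun a b h => by simp only at h; omega
  have hodd : Function.Injective fun n : ℕ => 2 * n + 1 := fun a b h => by simp only at h; omega
  set P := span 𝕜 (Set.range fun n => v (2 * n))
  have hodd_mem : ∀ n, v (2 * n + 1) ∈ Pᗮ ⊓ Y := fun n => by
    refine mem_inf.2 ⟨?_, hvY _⟩
    have : span 𝕜 {v (2 * n + 1)} ⟂ P :=
      isOrtho_span.2 (by rintro _ rfl _ ⟨m, rfl⟩; exact hv.2 (by omega))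
    exact this.le (mem_span_singleton_self _)
  refine ⟨P, span_le.2 (Set.range_subset_iff.2 fun n => hvY _),
    (hv.comp _ heven).not_finiteDimensional_of_forall_mem fun n => subset_span ⟨n, rfl⟩,
    (hv.comp _ hodd).not_finiteDimensional_of_forall_mem hodd_mem⟩

end Orthogonal

theorem Submodule.ne_bot_of_not_finiteDimensional {𝕜 E : Type*} [DivisionRing 𝕜] [AddCommGroup E]
    [Module 𝕜 E] {p : Submodule 𝕜 E} (hp : ¬ FiniteDimensional 𝕜 p) : p ≠ ⊥ := by
  rintro rfl
  exact hp inferInstance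

section Grassmannian

variable {E : Type} [NormedAddCommGroup E] [InnerProductSpace ℂ E]

/- With `Y = P ⊕ Q` split into two infinite-dimensional pieces, `Z = Qᗮ ⊓ X` contains `P` and
`Yᗮ ⊓ X ≠ ⊥` but misses `Q`, while `W = Q` is orthogonal to `Z`. -/
theorem exists_inGinf_incomparable_of_lt [CompleteSpace E] {X Y : Submodule ℂ E}
    (hX : inGinf X) (hY : inGinf Y) (hYX : Y < X) :
    ∃ Z W, inGinf Z ∧ inGinf W ∧ Z ≤ X ∧ W ≤ X ∧ Disjoint Z W ∧ ¬ Z ≤ Y ∧ ¬ Y ≤ Z := by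
  have : CompleteSpace Y := hY.1.completeSpace_coe
  obtain ⟨P, hPY, hP, hQ⟩ := exists_le_not_finiteDimensional_orthogonal_inf hY.2.1
  set Q := Pᗮ ⊓ Y
  have hQY : Q ≤ Y := inf_le_right
  have hPZ : P ≤ Qᗮ ⊓ X :=
    le_inf (P.le_orthogonal_orthogonal.trans (orthogonal_le inf_le_left)) (hPY.trans hYX.le)
  have hYperp_le : Yᗮ ⊓ X ≤ Qᗮ ⊓ X := inf_le_inf_right X (orthogonal_le hQY)
  have hYperp_ne : Yᗮ ⊓ X ≠ ⊥ := fun h => hYX.ne <| by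
    simpa [h] using sup_orthogonal_inf_of_hasOrthogonalProjection hYX.le
  refine ⟨Qᗮ ⊓ X, Q, ⟨?_, ?_, ?_⟩, ⟨?_, hQ, ?_⟩, inf_le_right, hQY.trans hYX.le, ?_, ?_, ?_⟩
  · exact (isClosed_orthogonal _).inter hX.1
  · exact fun _ => hP (finiteDimensional_of_le hPZ)
  · exact fun _ => hX.2.2 (finiteDimensional_of_le (orthogonal_le (inf_le_right : Qᗮ ⊓ X ≤ X)))
  · exact (isClosed_orthogonal _).inter hY.1
  · exact fun _ => hY.2.2 (finiteDimensional_of_le (orthogonal_le hQY))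
  · exact Q.orthogonal_disjoint.symm.mono_left inf_le_left
  · exact fun hZY => hYperp_ne <|
      (Y.orthogonal_disjoint.symm.mono_left inf_le_left).eq_bot_of_le (hYperp_le.trans hZY)
  · exact fun hYZ => ne_bot_of_not_finiteDimensional hQ <|
      (Q.orthogonal_disjoint.mono_right inf_le_left).eq_bot_of_le (hQY.trans hYZ)

namespace SendsPairsToEquiv

variable {f : Submodule ℂ E → Submodule ℂ E} {A B : Submodule ℂ E}

theorem exists_linearIsometry (hpair : SendsPairsToEquiv f) (hA : inGinf A) (hB : inGinf B) :
    ∃ L : E →ₗᵢ[ℂ] E, f A = A.map L.toLinearMap ∧ f B = B.map L.toLinearMap ∨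
      f A = B.map L.toLinearMap ∧ f B = A.map L.toLinearMap :=
  (hpair A B hA hB).imp fun _ hL => Set.pair_eq_pair_iff.1 hL

theorem le_or_le_iff (hpair : SendsPairsToEquiv f) (hA : inGinf A) (hB : inGinf B) :
    f A ≤ f B ∨ f B ≤ f A ↔ A ≤ B ∨ B ≤ A := by
  obtain ⟨L, ⟨hfA, hfB⟩ | ⟨hfA, hfB⟩⟩ := hpair.exists_linearIsometry hA hB <;>
    simp only [hfA, hfB, map_le_map_iff_of_injective L.injective, or_comm]

theorem disjoint_apply_of_disjoint (hpair : SendsPairsToEquiv f) (hA : inGinf A) (hB : inGinf B)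
    (h : Disjoint A B) : Disjoint (f A) (f B) := by
  obtain ⟨L, ⟨hfA, hfB⟩ | ⟨hfA, hfB⟩⟩ := hpair.exists_linearIsometry hA hB
  all_goals
    rw [hfA, hfB, disjoint_iff, ← map_inf _ L.injective]
    simp [disjoint_iff.1 h, inf_comm]

/- If `A < B` but `f B ≤ f A`, then `f B ≤ f Z` for the `Z` incomparable with `A`, and neither
`f W ≤ f B` nor `f B ≤ f W` is compatible with `f W ⊓ f Z = ⊥`, as `f W` and `f B` are nonzero. -/
theorem apply_le_apply [CompleteSpace E] (hpair : SendsPairsToEquiv f)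
    (hf : ∀ X, inGinf X → inGinf (f X)) (hA : inGinf A) (hB : inGinf B) (hAB : A ≤ B) :
    f A ≤ f B := by
  obtain rfl | hlt := hAB.eq_or_lt
  · rfl
  obtain ⟨Z, W, hZ, hW, hZB, hWB, hZW, hZA, hAZ⟩ := exists_inGinf_incomparable_of_lt hB hA hlt
  by_contra hne
  have hBA : f B ≤ f A := ((hpair.le_or_le_iff hA hB).2 (.inl hAB)).resolve_left hne
  have hBZ : f B ≤ f Z := ((hpair.le_or_le_iff hZ hB).2 (.inl hZB)).resolve_left fun h =>
    ((hpair.le_or_le_iff hZ hA).1 (.inl (h.trans hBA))).elim hZA hAZ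
  have hdisj := hpair.disjoint_apply_of_disjoint hW hZ hZW.symm
  rcases (hpair.le_or_le_iff hW hB).2 (.inl hWB) with h | h
  · exact ne_bot_of_not_finiteDimensional (hf W hW).2.1 (hdisj.eq_bot_of_le (h.trans hBZ))
  · exact ne_bot_of_not_finiteDimensional (hf B hB).2.1 (disjoint_self.1 (hdisj.mono h hBZ))

theorem exists_linearIsometry_of_le [CompleteSpace E] (hpair : SendsPairsToEquiv f)
    (hf : ∀ X, inGinf X → inGinf (f X)) (hA : inGinf A) (hB : inGinf B) (hAB : A ≤ B) :
    ∃ L : E →ₗᵢ[ℂ] E, f A = A.map L.toLinearMap ∧ f B = B.map L.toLinearMap := by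
  obtain ⟨L, hL | ⟨hfA, hfB⟩⟩ := hpair.exists_linearIsometry hA hB
  · exact ⟨L, hL⟩
  have hBA : B ≤ A := by
    rw [← map_le_map_iff_of_injective L.injective, ← hfA, ← hfB]
    exact hpair.apply_le_apply hf hA hB hAB
  obtain rfl := le_antisymm hAB hBA
  exact ⟨L, hfA, hfB⟩

end SendsPairsToEquiv

end Grassmannian

theorem stmt8_general
    (f : Submodule ℂ H → Submodule ℂ H)
    (hf : ∀ X, inGinf X → inGinf (f X))
    (hpair : SendsPairsToEquiv f) :
    ∀ X Y : Submodule ℂ H, inGinf X → inGinf Y → Y ≤ X →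
      ∀ (ι κ : Type) (_ : HilbertBasis ι ℂ (Yᗮ ⊓ X : Submodule ℂ H))
        (_ : HilbertBasis κ ℂ ((f Y)ᗮ ⊓ f X : Submodule ℂ H)),
        Cardinal.mk ι = Cardinal.mk κ := by
  intro X Y hX hY hYX ι κ b c
  obtain ⟨L, hfY, hfX⟩ := hpair.exists_linearIsometry_of_le hf hY hX hYX
  rw [hfX, hfY, ← map_orthogonal_inf] at c
  exact b.mk_eq_mk_of_map L c

/-- a map of `G_∞(H)` sending every pair of subspaces to an equivalent
pair preserves the codimension of `Y` in `X` for `Y ⊆ X`: the Hilbert dimension of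
the orthogonal complement of `Y` inside `X` equals that of the orthogonal complement
of `f Y` inside `f X`. -/
theorem stmt8 (hH : ¬ FiniteDimensional ℂ H)
    (f : Submodule ℂ H → Submodule ℂ H)
    (hf : ∀ X, inGinf X → inGinf (f X))
    (hpair : SendsPairsToEquiv f) :
    ∀ X Y : Submodule ℂ H, inGinf X → inGinf Y → Y ≤ X →
      ∀ (ι κ : Type) (_ : HilbertBasis ι ℂ (Yᗮ ⊓ X : Submodule ℂ H))
        (_ : HilbertBasis κ ℂ ((f Y)ᗮ ⊓ f X : Submodule ℂ H)),
        Cardinal.mk ι = Cardinal.mk κ :=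
  stmt8_general f hf hpair
end

section
/- Let H be an infinite-dimensional complex Hilbert space, X a closed subspace with dim X and codim X infinite, and A, B closed hyperplanes of X (i.e., closed subspaces of X of codimension 1 in X). Then A and B are ortho-adjacent (A ∩ B has codimension 1 in both A and B, and A, B are compatible) if and only if the 1-dimensional subspaces A^⊥ ∩ X and B^⊥ ∩ X are orthogonal. -/
/-!
Inside `X`, the closed hyperplane `A` is the orthogonal complement of the line `Aᗮ ⊓ X`, and
likewise for `B`. If the two lines are orthogonal, each lies in the other hyperplane, so
`A = (A ⊓ B) ⊕ (Bᗮ ⊓ X)` and `B = (A ⊓ B) ⊕ (Aᗮ ⊓ X)` are orthogonal sums of three mutually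
orthogonal pieces; gluing orthonormal bases of the pieces and extending to a Hilbert basis of `H`
shows compatibility, and `(A ⊓ B)ᗮ ⊓ A = Bᗮ ⊓ X` is a line. Conversely, if `A` and `B` are closed
spans of the parts `S`, `T` of a Hilbert basis `b`, then `S ⊄ T` and `T ⊄ S` since `A ⊓ B` is a
proper subspace of both; for `s ∈ S \ T` and `t ∈ T \ S` the lines are spanned by `b t` and `b s`.
-/

variable {H : Type} [NormedAddCommGroup H] [InnerProductSpace ℂ H] [CompleteSpace H]

/-- Two closed subspaces are compatible if there is an orthonormal basis of `H`
such that each of them is the closed span of a subset of that basis. -/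
def Compatible (X Y : Submodule ℂ H) : Prop :=
  ∃ (ι : Type) (b : HilbertBasis ι ℂ H) (S T : Set ι),
    X = (Submodule.span ℂ (⇑b '' S)).topologicalClosure ∧
    Y = (Submodule.span ℂ (⇑b '' T)).topologicalClosure

open Submodule Set
open scoped InnerProductSpace

section InnerProductSpace

variable {𝕜 E : Type*} [RCLike 𝕜] [NormedAddCommGroup E] [InnerProductSpace 𝕜 E]

theorem Submodule.orthogonal_inf_orthogonal_inf_of_le {K₁ K₂ : Submodule 𝕜 E} (h : K₁ ≤ K₂)
    [K₁.HasOrthogonalProjection] : (K₁ᗮ ⊓ K₂)ᗮ ⊓ K₂ = K₁ := by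
  set D := K₁ᗮ ⊓ K₂
  have hK₁D : K₁ ≤ Dᗮ := IsOrtho.symm (inf_le_left : D ≤ K₁ᗮ)
  calc Dᗮ ⊓ K₂ = Dᗮ ⊓ (K₁ ⊔ D) := by rw [sup_orthogonal_inf_of_hasOrthogonalProjection h]
    _ = K₁ ⊔ D ⊓ Dᗮ := by rw [inf_comm, sup_inf_assoc_of_le D hK₁D]
    _ = K₁ := by rw [inf_orthogonal_eq_bot, sup_bot_eq]

theorem Submodule.orthogonal_inf_inf_eq_inf {A B X : Submodule 𝕜 E} (hAX : A ≤ X) (hBX : B ≤ X)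
    [B.HasOrthogonalProjection] : (Bᗮ ⊓ X)ᗮ ⊓ A = A ⊓ B :=
  calc (Bᗮ ⊓ X)ᗮ ⊓ A = A ⊓ ((Bᗮ ⊓ X)ᗮ ⊓ X) := by rw [inf_left_comm, inf_eq_left.mpr hAX]
    _ = A ⊓ B := by rw [orthogonal_inf_orthogonal_inf_of_le hBX]

theorem Submodule.finrank_orthogonal_inf_inf_eq_zero_of_le {A B : Submodule 𝕜 E} (h : A ≤ B) :
    Module.finrank 𝕜 ↥((A ⊓ B)ᗮ ⊓ A) = 0 := by
  rw [inf_eq_left.mpr h, inf_comm, inf_orthogonal_eq_bot, finrank_bot]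

theorem Submodule.topologicalClosure_sup_topologicalClosure (K L : Submodule 𝕜 E) :
    (K.topologicalClosure ⊔ L.topologicalClosure).topologicalClosure =
      (K ⊔ L).topologicalClosure :=
  le_antisymm
    (topologicalClosure_minimal _
      (sup_le (topologicalClosure_mono le_sup_left) (topologicalClosure_mono le_sup_right))
      (isClosed_topologicalClosure _))
    (topologicalClosure_mono (sup_le_sup (le_topologicalClosure K) (le_topologicalClosure L)))

theorem Orthonormal.union {s t : Set E} (hs : Orthonormal 𝕜 ((↑) : s → E))
    (ht : Orthonormal 𝕜 ((↑) : t → E)) (hst : ∀ u ∈ s, ∀ v ∈ t, ⟪u, v⟫_𝕜 = 0) :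
    Orthonormal 𝕜 ((↑) : ↥(s ∪ t) → E) := by
  classical
  have hne : ∀ u ∈ s, ∀ v ∈ t, u ≠ v := by
    rintro u hu _ hv rfl
    exact hs.ne_zero ⟨u, hu⟩ (inner_self_eq_zero.mp (hst u hu u hv))
  rw [orthonormal_subtype_iff_ite] at hs ht ⊢
  rintro u (hu | hu) v (hv | hv)
  · exact hs u hu v hv
  · rw [if_neg (hne u hu v hv), hst u hu v hv]
  · rw [if_neg (hne v hv u hu).symm, inner_eq_zero_symm, hst v hv u hu]
  · exact ht u hu v hv

theorem Orthonormal.mem_orthogonal_topologicalClosure_span_image {ι : Type*} {v : ι → E}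
    (hv : Orthonormal 𝕜 v) {S : Set ι} {i : ι} (hi : i ∉ S) :
    v i ∈ (span 𝕜 (v '' S)).topologicalClosureᗮ := by
  rw [orthogonal_closure, ← span_singleton_le_iff_mem]
  refine isOrtho_span.mpr ?_
  rintro _ rfl _ ⟨j, hj, rfl⟩
  exact hv.2 (ne_of_mem_of_not_mem hj hi).symm

theorem exists_orthonormal_subset_topologicalClosure_span_eq [CompleteSpace E]
    {K : Submodule 𝕜 E} (hK : IsClosed (K : Set E)) :
    ∃ s ⊆ (K : Set E), Orthonormal 𝕜 ((↑) : s → E) ∧ (span 𝕜 s).topologicalClosure = K := by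
  have := hK.completeSpace_coe
  obtain ⟨w, b, hb⟩ := exists_hilbertBasis 𝕜 K
  refine ⟨(↑) '' w, by rintro _ ⟨x, -, rfl⟩; exact x.2, ?_, ?_⟩
  · classical
    have hw := b.orthonormal
    rw [hb, orthonormal_subtype_iff_ite] at hw
    rw [orthonormal_subtype_iff_ite]
    rintro _ ⟨x, hx, rfl⟩ _ ⟨y, hy, rfl⟩
    rw [← coe_inner, hw x hx y hy]
    simp only [Subtype.ext_iff]
  · have hspan : span 𝕜 ((↑) '' w : Set E) = (span 𝕜 w).map K.subtype := span_image K.subtype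
    refine le_antisymm (topologicalClosure_minimal _ (hspan ▸ map_subtype_le _ _) hK) ?_
    calc K = (span 𝕜 w).topologicalClosure.map K.subtype := by
          rw [← Subtype.range_coe (s := w), ← hb, b.dense_span, Submodule.map_top, range_subtype]
      _ ≤ _ := hspan ▸ topologicalClosure_map K.subtypeL (span 𝕜 w)

theorem Orthonormal.isOrtho_orthogonal_inf {ι : Type*} {v : ι → E} (hv : Orthonormal 𝕜 v)
    {S T : Set ι} {X A B : Submodule 𝕜 E} (hA : A = (span 𝕜 (v '' S)).topologicalClosure)
    (hB : B = (span 𝕜 (v '' T)).topologicalClosure) (hAX : A ≤ X) (hBX : B ≤ X)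
    (hA1 : Module.finrank 𝕜 ↥(Aᗮ ⊓ X) = 1) (hB1 : Module.finrank 𝕜 ↥(Bᗮ ⊓ X) = 1)
    (hWA : Module.finrank 𝕜 ↥((A ⊓ B)ᗮ ⊓ A) = 1) (hWB : Module.finrank 𝕜 ↥((A ⊓ B)ᗮ ⊓ B) = 1) :
    (Aᗮ ⊓ X) ⟂ (Bᗮ ⊓ X) := by
  have hmem : ∀ {U : Set ι} {i : ι}, i ∈ U → v i ∈ (span 𝕜 (v '' U)).topologicalClosure :=
    fun hi => le_topologicalClosure _ (subset_span (mem_image_of_mem v hi))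
  obtain ⟨s, hsS, hsT⟩ := not_subset.mp fun hST => zero_ne_one <|
    (finrank_orthogonal_inf_inf_eq_zero_of_le (A := A) (B := B)
      (by rw [hA, hB]; exact topologicalClosure_mono (span_mono (image_mono hST)))).symm.trans hWA
  obtain ⟨t, htT, htS⟩ := not_subset.mp fun hTS => zero_ne_one <|
    (finrank_orthogonal_inf_inf_eq_zero_of_le (A := B) (B := A)
      (by rw [hA, hB]; exact topologicalClosure_mono (span_mono (image_mono hTS)))).symm.trans
      (inf_comm A B ▸ hWB)
  have hvt : v t ∈ Aᗮ ⊓ X :=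
    ⟨hA ▸ hv.mem_orthogonal_topologicalClosure_span_image htS, hBX (hB ▸ hmem htT)⟩
  have hvs : v s ∈ Bᗮ ⊓ X :=
    ⟨hB ▸ hv.mem_orthogonal_topologicalClosure_span_image hsT, hAX (hA ▸ hmem hsS)⟩
  rw [eq_span_singleton_of_mem_of_finrank_eq_one hA1 hvt (hv.ne_zero t),
    eq_span_singleton_of_mem_of_finrank_eq_one hB1 hvs (hv.ne_zero s), isOrtho_span]
  rintro _ rfl _ rfl
  exact hv.2 (ne_of_mem_of_not_mem htT hsT)

end InnerProductSpace

theorem Compatible.of_orthonormal {s S T : Set H} (hs : Orthonormal ℂ ((↑) : s → H))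
    (hS : S ⊆ s) (hT : T ⊆ s) :
    Compatible (span ℂ S).topologicalClosure (span ℂ T).topologicalClosure := by
  obtain ⟨w, b, hsw, hb⟩ := hs.exists_hilbertBasis_extension
  have himage : ∀ {U : Set H}, U ⊆ s → ⇑b '' ((↑) ⁻¹' U) = U := fun hU => by
    rw [hb, Subtype.image_preimage_coe, inter_eq_right.mpr (hU.trans hsw)]
  exact ⟨w, b, (↑) ⁻¹' S, (↑) ⁻¹' T, by rw [himage hS], by rw [himage hT]⟩

theorem compatible_sup_sup_of_isOrtho {C D E : Submodule ℂ H} (hC : IsClosed (C : Set H))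
    (hD : IsClosed (D : Set H)) (hE : IsClosed (E : Set H))
    (hCD : C ⟂ D) (hCE : C ⟂ E) (hDE : D ⟂ E) :
    Compatible (C ⊔ D).topologicalClosure (C ⊔ E).topologicalClosure := by
  obtain ⟨sC, hsC, hCon, hCspan⟩ := exists_orthonormal_subset_topologicalClosure_span_eq hC
  obtain ⟨sD, hsD, hDon, hDspan⟩ := exists_orthonormal_subset_topologicalClosure_span_eq hD
  obtain ⟨sE, hsE, hEon, hEspan⟩ := exists_orthonormal_subset_topologicalClosure_span_eq hE
  have hon : Orthonormal ℂ ((↑) : ↥(sC ∪ sD ∪ sE) → H) :=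
    (hCon.union hDon fun u hu v hv => hCD.inner_eq (hsC hu) (hsD hv)).union hEon <| by
      rintro u (hu | hu) v hv
      · exact hCE.inner_eq (hsC hu) (hsE hv)
      · exact hDE.inner_eq (hsD hu) (hsE hv)
  have hclosure : ∀ {s t : Set H} {K L : Submodule ℂ H}, (span ℂ s).topologicalClosure = K →
      (span ℂ t).topologicalClosure = L →
        (span ℂ (s ∪ t)).topologicalClosure = (K ⊔ L).topologicalClosure := by
    rintro s t _ _ rfl rfl
    rw [span_union, topologicalClosure_sup_topologicalClosure]
  rw [← hclosure hCspan hDspan, ← hclosure hCspan hEspan]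
  exact Compatible.of_orthonormal hon subset_union_left (union_subset_union_left _ subset_union_left)

theorem compatible_and_finrank_orthogonal_inf_inf_of_isOrtho {X A B : Submodule ℂ H}
    (hAc : IsClosed (A : Set H)) (hBc : IsClosed (B : Set H)) (hAX : A ≤ X) (hBX : B ≤ X)
    (hA1 : Module.finrank ℂ ↥(Aᗮ ⊓ X) = 1) (hB1 : Module.finrank ℂ ↥(Bᗮ ⊓ X) = 1)
    (h : (Aᗮ ⊓ X) ⟂ (Bᗮ ⊓ X)) :
    Compatible A B ∧ Module.finrank ℂ ↥((A ⊓ B)ᗮ ⊓ A) = 1 ∧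
      Module.finrank ℂ ↥((A ⊓ B)ᗮ ⊓ B) = 1 := by
  have := hAc.completeSpace_coe
  have := hBc.completeSpace_coe
  have : FiniteDimensional ℂ ↥(Aᗮ ⊓ X) := Module.finite_of_finrank_eq_succ hA1
  have : FiniteDimensional ℂ ↥(Bᗮ ⊓ X) := Module.finite_of_finrank_eq_succ hB1
  have hBA : Bᗮ ⊓ X ≤ A :=
    (le_inf h.symm inf_le_right).trans_eq (orthogonal_inf_orthogonal_inf_of_le hAX)
  have hAB : Aᗮ ⊓ X ≤ B :=
    (le_inf h inf_le_right).trans_eq (orthogonal_inf_orthogonal_inf_of_le hBX)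
  have hA : (Bᗮ ⊓ X)ᗮ ⊓ A = A ⊓ B := orthogonal_inf_inf_eq_inf hAX hBX
  have hB : (Aᗮ ⊓ X)ᗮ ⊓ B = A ⊓ B := (orthogonal_inf_inf_eq_inf hBX hAX).trans (inf_comm _ _)
  refine ⟨?_, ?_, ?_⟩
  · have hA' : A = (A ⊓ B ⊔ Bᗮ ⊓ X).topologicalClosure := by
      rw [← hA, sup_comm, sup_orthogonal_inf_of_hasOrthogonalProjection hBA,
        hAc.submodule_topologicalClosure_eq]
    have hB' : B = (A ⊓ B ⊔ Aᗮ ⊓ X).topologicalClosure := by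
      rw [← hB, sup_comm, sup_orthogonal_inf_of_hasOrthogonalProjection hAB,
        hBc.submodule_topologicalClosure_eq]
    have := compatible_sup_sup_of_isOrtho (hAc.inter hBc) (closed_of_finiteDimensional _)
      (closed_of_finiteDimensional _) ((isOrtho_orthogonal_right B).mono inf_le_right inf_le_left)
      ((isOrtho_orthogonal_right A).mono inf_le_left inf_le_left) h.symm
    rwa [← hA', ← hB'] at this
  · rw [← hA, orthogonal_inf_orthogonal_inf_of_le hBA]
    exact hB1
  · rw [← hB, orthogonal_inf_orthogonal_inf_of_le hAB]
    exact hA1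

theorem stmt12_general (X : Submodule ℂ H) (A B : Submodule ℂ H)
    (hAc : IsClosed (A : Set H)) (hBc : IsClosed (B : Set H))
    (hAX : A ≤ X) (hBX : B ≤ X)
    (hA1 : Module.finrank ℂ (Aᗮ ⊓ X : Submodule ℂ H) = 1)
    (hB1 : Module.finrank ℂ (Bᗮ ⊓ X : Submodule ℂ H) = 1) :
    (Compatible A B ∧
      Module.finrank ℂ ((A ⊓ B)ᗮ ⊓ A : Submodule ℂ H) = 1 ∧
      Module.finrank ℂ ((A ⊓ B)ᗮ ⊓ B : Submodule ℂ H) = 1)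
    ↔ (Aᗮ ⊓ X).IsOrtho (Bᗮ ⊓ X) :=
  ⟨fun ⟨⟨_, b, _, _, hA, hB⟩, hWA, hWB⟩ =>
      b.orthonormal.isOrtho_orthogonal_inf hA hB hAX hBX hA1 hB1 hWA hWB,
    compatible_and_finrank_orthogonal_inf_inf_of_isOrtho hAc hBc hAX hBX hA1 hB1⟩

/-- closed hyperplanes `A, B` of `X ∈ G_∞(H)` are ortho-adjacent
(compatible with `A ⊓ B` of codimension `1` in each) if and only if the
one-dimensional subspaces `Aᗮ ⊓ X` and `Bᗮ ⊓ X` are orthogonal. -/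
theorem stmt12 (hH : ¬ FiniteDimensional ℂ H)
    (X : Submodule ℂ H) (hXc : IsClosed (X : Set H))
    (hXdim : ¬ FiniteDimensional ℂ X) (hXcodim : ¬ FiniteDimensional ℂ Xᗮ)
    (A B : Submodule ℂ H)
    (hAc : IsClosed (A : Set H)) (hBc : IsClosed (B : Set H))
    (hAX : A ≤ X) (hBX : B ≤ X)
    (hA1 : Module.finrank ℂ (Aᗮ ⊓ X : Submodule ℂ H) = 1)
    (hB1 : Module.finrank ℂ (Bᗮ ⊓ X : Submodule ℂ H) = 1) :
    (Compatible A B ∧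
      Module.finrank ℂ ((A ⊓ B)ᗮ ⊓ A : Submodule ℂ H) = 1 ∧
      Module.finrank ℂ ((A ⊓ B)ᗮ ⊓ B : Submodule ℂ H) = 1)
    ↔ (Aᗮ ⊓ X).IsOrtho (Bᗮ ⊓ X) :=
  stmt12_general X A B hAc hBc hAX hBX hA1 hB1
end

section
/- Let H be an infinite-dimensional complex Hilbert space, f : G_∞(H) → G_∞(H) a map sending every pair of subspaces to an equivalent pair, and L the associated linear or conjugate-linear isometry with f(X) = L(X) ⊕ O(X) as in the structure theorem. Then for X ∈ G_∞(H), the image f(G^1(X)) consists exactly of those closed hyperplanes of f(X) that contain O(X); consequently f(G^1(X)) = G^1(f(X)) if and only if O(X) = 0. -/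
/-!
Write `f Y = T(Y) ⊕ O(Y)` with `T` a (semi)linear isometry and `O(Y) ⟂ range T`. Closed
hyperplanes of `X` are the closed subspaces covered by `X` in the lattice of subspaces, and since
`range T` and `O(X)` are disjoint, `A ↦ T(A) ⊔ O(X)` is an order embedding onto the interval
`[O(X), range T ⊔ O(X)]`, so it preserves and reflects covering.

For a hyperplane `A` of `X` the pair `(X, A)` goes to an equivalent pair, and the swapped
assignment is impossible; so `f A` is covered by `f X`, `O(A) ≤ O(X)` by orthogonality, and
`f A ≤ T(A) ⊔ O(X) ⋖ f X` forces `f A = T(A) ⊔ O(X)`. Conversely a hyperplane `B ⊇ O(X)` of `f X`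
is `T(T⁻¹ B) ⊔ O(X)`. A nonzero `o ∈ O(X)` is missed by the hyperplane `o^⊥ ∩ f X`.
-/

variable {H : Type} [NormedAddCommGroup H] [InnerProductSpace ℂ H] [CompleteSpace H]

/-- `L : H → H` is a linear or conjugate-linear isometry. -/
def IsLinOrConjIsometry (L : H → H) : Prop :=
  (∃ T : H →ₗᵢ[ℂ] H, ∀ x, L x = T x) ∨
  (∃ T : H →ₛₗᵢ[starRingEnd ℂ] H, ∀ x, L x = T x)

/-- `L` and `O` decompose `f` as in the structure theorem. -/
def Decomposes (f : Submodule ℂ H → Submodule ℂ H) (L : H → H)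
    (O : Submodule ℂ H → Submodule ℂ H) : Prop :=
  ∀ X : Submodule ℂ H, inGinf X →
    IsClosed ((O X : Set H)) ∧
    (∀ y ∈ O X, ∀ x : H, inner ℂ (L x) y = (0 : ℂ)) ∧
    f X = Submodule.span ℂ (L '' X) ⊔ O X

/-- The set `G^1(X)` of closed hyperplanes of `X`. -/
def hyperplanesOf (X : Submodule ℂ H) : Set (Submodule ℂ H) :=
  {A | A ≤ X ∧ IsClosed (A : Set H) ∧ Module.finrank ℂ (Aᗮ ⊓ X : Submodule ℂ H) = 1}

theorem covBy_sup_iff_isAtom {α : Type*} [Lattice α] [OrderBot α] [IsModularLattice α]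
    {a b : α} (h : Disjoint a b) : a ⋖ a ⊔ b ↔ IsAtom b := by
  rw [← bot_covBy_iff, ← h.eq_bot]
  exact ⟨inf_covBy_of_covBy_sup_left,
    fun hb => sup_comm a b ▸ covBy_sup_of_inf_covBy_left (inf_comm a b ▸ hb)⟩

namespace Submodule

variable {R R₂ M M₂ : Type*} [Ring R] [Ring R₂] [AddCommGroup M] [AddCommGroup M₂]
  [Module R M] [Module R₂ M₂] {σ : R →+* R₂} [RingHomSurjective σ]
  {T : M →ₛₗ[σ] M₂} {V : Submodule R₂ M₂}

theorem map_sup_le_map_sup_iff (hT : Function.Injective T) (hV : Disjoint (LinearMap.range T) V)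
    {A B : Submodule R M} : A.map T ⊔ V ≤ B.map T ⊔ V ↔ A ≤ B := by
  refine ⟨fun h => (map_le_map_iff_of_injective hT _ _).1 ?_,
    fun h => sup_le_sup_right (map_mono h) _⟩
  calc A.map T ≤ (B.map T ⊔ V) ⊓ LinearMap.range T :=
        le_inf (le_sup_left.trans h) LinearMap.map_le_range
    _ = B.map T := by
        rw [sup_inf_assoc_of_le _ LinearMap.map_le_range, hV.symm.eq_bot, sup_bot_eq]

theorem map_comap_sup_eq {B : Submodule R₂ M₂} (hVB : V ≤ B) (hB : B ≤ LinearMap.range T ⊔ V) :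
    (B.comap T).map T ⊔ V = B := by
  rw [map_comap_eq, sup_comm, ← sup_inf_assoc_of_le _ hVB, sup_comm, inf_eq_right.2 hB]

def mapSupEmbedding (hT : Function.Injective T) (hV : Disjoint (LinearMap.range T) V) :
    Submodule R M ↪o Submodule R₂ M₂ :=
  OrderEmbedding.ofMapLEIff (fun A => A.map T ⊔ V) fun _ _ => map_sup_le_map_sup_iff hT hV

theorem map_sup_covBy_map_sup_iff (hT : Function.Injective T)
    (hV : Disjoint (LinearMap.range T) V) {A B : Submodule R M} : A.map T ⊔ V ⋖ B.map T ⊔ V ↔ A ⋖ B := by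
  refine Set.OrdConnected.apply_covBy_apply_iff (mapSupEmbedding hT hV) ⟨?_⟩
  rintro _ ⟨A, rfl⟩ _ ⟨B, rfl⟩ C ⟨hAC, hCB⟩
  exact ⟨C.comap T, map_comap_sup_eq (le_sup_right.trans hAC)
    (hCB.trans (sup_le_sup_right LinearMap.map_le_range _))⟩

end Submodule

section Hilbert

open Submodule

theorem mem_hyperplanesOf_iff {A X : Submodule ℂ H} :
    A ∈ hyperplanesOf X ↔ IsClosed (A : Set H) ∧ A ⋖ X := by
  refine ⟨fun ⟨hAX, hAc, hrank⟩ => ⟨hAc, ?_⟩, fun ⟨hAc, hAX⟩ => ⟨hAX.le, hAc, ?_⟩⟩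
  all_goals
    have : CompleteSpace A := hAc.completeSpace_coe
    have hdisj : Disjoint A (Aᗮ ⊓ X) := A.orthogonal_disjoint.mono_right inf_le_left
  · rwa [← sup_orthogonal_inf_of_hasOrthogonalProjection hAX, covBy_sup_iff_isAtom hdisj,
      isAtom_iff_finrank_eq_one]
  · rwa [← sup_orthogonal_inf_of_hasOrthogonalProjection hAX.le, covBy_sup_iff_isAtom hdisj,
      isAtom_iff_finrank_eq_one] at hAX

theorem inGinf_of_mem_hyperplanesOf {A X : Submodule ℂ H} (hX : inGinf X)
    (hA : A ∈ hyperplanesOf X) : inGinf A := by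
  obtain ⟨hAX, hAc, hrank⟩ := hA
  refine ⟨hAc, fun hA => hX.2.1 ?_,
    fun hA => hX.2.2 (finiteDimensional_of_le (orthogonal_le hAX))⟩
  have : CompleteSpace A := hAc.completeSpace_coe
  have : FiniteDimensional ℂ (Aᗮ ⊓ X : Submodule ℂ H) := .of_finrank_pos (by omega)
  rw [← sup_orthogonal_inf_of_hasOrthogonalProjection hAX]
  infer_instance

theorem orthogonal_span_singleton_inf_mem_hyperplanesOf {Y : Submodule ℂ H}
    (hY : IsClosed (Y : Set H)) {v : H} (hvY : v ∈ Y) (hv : v ≠ 0) :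
    (ℂ ∙ v)ᗮ ⊓ Y ∈ hyperplanesOf Y := by
  refine mem_hyperplanesOf_iff.2 ⟨(isClosed_orthogonal _).inter hY, ?_⟩
  have hvY' : ℂ ∙ v ≤ Y := (span_singleton_le_iff_mem v Y).2 hvY
  conv_rhs => rw [← sup_orthogonal_inf_of_hasOrthogonalProjection hvY']
  exact covBy_span_singleton_sup fun hv' =>
    hv (inner_self_eq_zero.1 (mem_orthogonal_singleton_iff_inner_right.1 hv'.1))

theorem eq_bot_of_forall_mem_hyperplanesOf_le {V Y : Submodule ℂ H} (hY : IsClosed (Y : Set H))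
    (hVY : V ≤ Y) (h : ∀ B ∈ hyperplanesOf Y, V ≤ B) : V = ⊥ := by
  by_contra hV
  obtain ⟨v, hvV, hv⟩ := V.ne_bot_iff.1 hV
  have hvB := h _ (orthogonal_span_singleton_inf_mem_hyperplanesOf hY (hVY hvV) hv) hvV
  exact hv (inner_self_eq_zero.1 (mem_orthogonal_singleton_iff_inner_right.1 hvB.1))

theorem Decomposes.le_orthogonal_and_eq {E : Type} [NormedAddCommGroup E] [InnerProductSpace ℂ E]
    {σ : ℂ →+* ℂ} [RingHomSurjective σ] {T : E →ₛₗᵢ[σ] E} {f O : Submodule ℂ E → Submodule ℂ E}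
    (hdec : Decomposes f T O) {Y : Submodule ℂ E} (hY : inGinf Y) :
    O Y ≤ (LinearMap.range T.toLinearMap)ᗮ ∧ f Y = Y.map T.toLinearMap ⊔ O Y := by
  obtain ⟨-, horth, hfY⟩ := hdec Y hY
  refine ⟨fun y hy => (mem_orthogonal _ y).2 ?_, ?_⟩
  · rintro _ ⟨x, rfl⟩
    exact horth y hy x
  · rw [hfY, show (T : E → E) = T.toLinearMap from rfl, span_image, span_eq]

section Semilinear

variable {σ : ℂ →+* ℂ} [RingHomSurjective σ] {T : H →ₛₗᵢ[σ] H}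
  {f O : Submodule ℂ H → Submodule ℂ H} {X : Submodule ℂ H}

theorem eq_map_sup_of_mem_hyperplanesOf (hpair : SendsPairsToEquiv f) (hdec : Decomposes f T O)
    (hX : inGinf X) {A : Submodule ℂ H} (hA : A ∈ hyperplanesOf X) :
    f A = A.map T.toLinearMap ⊔ O X := by
  have hAG := inGinf_of_mem_hyperplanesOf hX hA
  have hAX := (mem_hyperplanesOf_iff.1 hA).2
  obtain ⟨hOX, hfX⟩ := hdec.le_orthogonal_and_eq hX
  obtain ⟨hOA, hfA⟩ := hdec.le_orthogonal_and_eq hAG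
  have hdisj {V : Submodule ℂ H} (hV : V ≤ (LinearMap.range T.toLinearMap)ᗮ) :
      Disjoint (LinearMap.range T.toLinearMap) V :=
    (orthogonal_disjoint _).mono_right hV
  obtain ⟨T', hT'⟩ := hpair X A hX hAG
  rcases Set.pair_eq_pair_iff.1 hT' with ⟨hX', hA'⟩ | ⟨hX', hA'⟩
  · have hcov : f A ⋖ f X := hA' ▸ hX' ▸ map_covBy_of_injective T'.injective hAX
    have hOAX : O A ≤ O X :=
      calc O A ≤ (X.map T.toLinearMap ⊔ O X) ⊓ (LinearMap.range T.toLinearMap)ᗮ :=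
            le_inf (hfX ▸ (hfA ▸ le_sup_right).trans hcov.le) hOA
        _ = O X := by
            rw [sup_comm, sup_inf_assoc_of_le _ hOX,
              ((orthogonal_disjoint _).mono_left LinearMap.map_le_range).eq_bot, sup_bot_eq]
    have hle : f A ≤ A.map T.toLinearMap ⊔ O X := hfA ▸ sup_le_sup_left hOAX _
    have hcov' : A.map T.toLinearMap ⊔ O X ⋖ f X :=
      hfX ▸ (map_sup_covBy_map_sup_iff T.injective (hdisj hOX)).2 hAX
    exact ((hcov.eq_or_eq hle hcov'.le).resolve_right hcov'.ne).symm
  · -- the swapped assignment would give `f X ≤ f A`, hence `X ≤ A`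
    have hle : f X ≤ f A := hX' ▸ hA' ▸ map_mono hAX.le
    refine absurd ((map_sup_le_map_sup_iff T.injective (hdisj hOA)).1 ?_) hAX.lt.not_ge
    rw [← hfA]
    exact sup_le ((hfX ▸ le_sup_left).trans hle) (hfA ▸ le_sup_right)

theorem image_hyperplanesOf_eq (hf : ∀ X, inGinf X → inGinf (f X))
    (hpair : SendsPairsToEquiv f) (hdec : Decomposes f T O) (hX : inGinf X) :
    f '' hyperplanesOf X = {B ∈ hyperplanesOf (f X) | O X ≤ B} := by
  obtain ⟨hOX, hfX⟩ := hdec.le_orthogonal_and_eq hX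
  have hdisj : Disjoint (LinearMap.range T.toLinearMap) (O X) :=
    (orthogonal_disjoint _).mono_right hOX
  ext B
  constructor
  · rintro ⟨A, hA, rfl⟩
    have hfA := eq_map_sup_of_mem_hyperplanesOf hpair hdec hX hA
    refine ⟨mem_hyperplanesOf_iff.2 ⟨(hf A (inGinf_of_mem_hyperplanesOf hX hA)).1, ?_⟩,
      hfA ▸ le_sup_right⟩
    rw [hfA, hfX]
    exact (map_sup_covBy_map_sup_iff T.injective hdisj).2 (mem_hyperplanesOf_iff.1 hA).2
  · rintro ⟨hB, hOB⟩
    obtain ⟨hBc, hBX⟩ := mem_hyperplanesOf_iff.1 hB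
    have hBeq : (B.comap T.toLinearMap).map T.toLinearMap ⊔ O X = B :=
      map_comap_sup_eq hOB (hBX.le.trans (hfX ▸ sup_le_sup_right LinearMap.map_le_range _))
    have hA : B.comap T.toLinearMap ∈ hyperplanesOf X := by
      refine mem_hyperplanesOf_iff.2 ⟨hBc.preimage T.continuous,
        (map_sup_covBy_map_sup_iff T.injective hdisj).1 ?_⟩
      rwa [hBeq, ← hfX]
    exact ⟨_, hA, (eq_map_sup_of_mem_hyperplanesOf hpair hdec hX hA).trans hBeq⟩

end Semilinear

end Hilbert

theorem stmt15_general
    (f : Submodule ℂ H → Submodule ℂ H)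
    (hf : ∀ X, inGinf X → inGinf (f X))
    (hpair : SendsPairsToEquiv f)
    (L : H → H) (hL : IsLinOrConjIsometry L)
    (O : Submodule ℂ H → Submodule ℂ H) (hdec : Decomposes f L O)
    (X : Submodule ℂ H) (hX : inGinf X) :
    f '' hyperplanesOf X = {B ∈ hyperplanesOf (f X) | O X ≤ B} ∧
    (f '' hyperplanesOf X = hyperplanesOf (f X) ↔ O X = ⊥) := by
  have himage : f '' hyperplanesOf X = {B ∈ hyperplanesOf (f X) | O X ≤ B} := by
    rcases hL with ⟨T, hT⟩ | ⟨T, hT⟩ <;> obtain rfl : L = T := funext hT <;>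
      exact image_hyperplanesOf_eq hf hpair hdec hX
  have hOX : O X ≤ f X := by
    rw [(hdec X hX).2.2]
    exact le_sup_right
  refine ⟨himage, ?_⟩
  rw [himage, Set.sep_eq_self_iff_mem_true]
  exact ⟨eq_bot_of_forall_mem_hyperplanesOf_le (hf X hX).1 hOX, fun h _ _ => h ▸ bot_le⟩

/-- with `f X = L(X) ⊕ O(X)` as in the structure theorem,
`f(G^1(X))` is exactly the set of closed hyperplanes of `f X` containing `O X`;
consequently `f(G^1(X)) = G^1(f X)` if and only if `O X = ⊥`. -/
theorem stmt15 (hH : ¬ FiniteDimensional ℂ H)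
    (f : Submodule ℂ H → Submodule ℂ H)
    (hf : ∀ X, inGinf X → inGinf (f X))
    (hpair : SendsPairsToEquiv f)
    (L : H → H) (hL : IsLinOrConjIsometry L)
    (O : Submodule ℂ H → Submodule ℂ H) (hdec : Decomposes f L O)
    (X : Submodule ℂ H) (hX : inGinf X) :
    f '' hyperplanesOf X = {B ∈ hyperplanesOf (f X) | O X ≤ B} ∧
    (f '' hyperplanesOf X = hyperplanesOf (f X) ↔ O X = ⊥) :=
  stmt15_general f hf hpair L hL O hdec X hX
end

section
/- Let H be an infinite-dimensional complex Hilbert space and X, Y ∈ G_∞(H) such that X ∩ Y is finite-dimensional. Then there exists Z ∈ G_∞(H) such that both X ∩ Z and Y ∩ Z belong to G_∞(H) (i.e., are closed subspaces of infinite dimension and infinite codimension). -/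
/-!
Pick an orthonormal family with `v (0, n) ∈ X`, `v (1, n) ∈ Y` and `v (2, n) ∈ Xᗮ`: each of these
spaces is infinite-dimensional, so a unit vector in it can be chosen orthogonal to the finitely many
vectors chosen before. Let `Z` be the orthogonal complement of the span of the `v (2, n)`. Then
`X ⊓ Z`, `Y ⊓ Z` and `Zᗮ` contain the orthonormal sequences `v (0, n)`, `v (1, n)`, `v (2, n)`,
while `(X ⊓ Z)ᗮ ⊇ Xᗮ` and `(Y ⊓ Z)ᗮ ⊇ Yᗮ`.
-/

variable {H : Type} [NormedAddCommGroup H] [InnerProductSpace ℂ H] [CompleteSpace H]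

open Submodule

open scoped InnerProductSpace

theorem not_finiteDimensional_of_linearIndependent_mem {K V ι : Type*} [DivisionRing K]
    [AddCommGroup V] [Module K V] [Infinite ι] {S : Submodule K V} {v : ι → V}
    (hv : LinearIndependent K v) (hS : ∀ i, v i ∈ S) : ¬ FiniteDimensional K S := fun _ =>
  Module.Finite.not_linearIndependent_of_infinite (R := K) (fun i => (⟨v i, hS i⟩ : S))
    (LinearIndependent.of_comp S.subtype hv)

section InnerProductSpace

variable {𝕜 E : Type*} [RCLike 𝕜] [NormedAddCommGroup E] [InnerProductSpace 𝕜 E]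

theorem Orthonormal.mem_orthogonal_span_image {ι : Type*} {v : ι → E} (hv : Orthonormal 𝕜 v)
    {s : Set ι} {i : ι} (hi : i ∉ s) : v i ∈ (span 𝕜 (v '' s))ᗮ := by
  rw [mem_orthogonal]
  intro u hu
  obtain ⟨l, hl, rfl⟩ := (Finsupp.mem_span_image_iff_linearCombination 𝕜).mp hu
  exact hv.inner_finsupp_eq_zero hi hl

theorem exists_mem_orthogonal_norm_eq_one {S : Submodule 𝕜 E} (hS : ¬ FiniteDimensional 𝕜 S)
    (F : Submodule 𝕜 E) [FiniteDimensional 𝕜 F] : ∃ x ∈ S, x ∈ Fᗮ ∧ ‖x‖ = 1 := by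
  have hSF : S ⊓ Fᗮ ≠ ⊥ := by
    intro h
    refine hS (FiniteDimensional.of_injective (F.orthogonalProjectionOnto.toLinearMap ∘ₗ S.subtype)
      (LinearMap.ker_eq_bot.mp (eq_bot_iff.mpr fun x hx => ?_)))
    have hx' : (x : E) ∈ S ⊓ Fᗮ := ⟨x.2, orthogonalProjectionOnto_eq_zero_iff.mp hx⟩
    rw [h, mem_bot] at hx'
    exact (mem_bot 𝕜).mpr (Subtype.ext hx')
  obtain ⟨x, ⟨hxS, hxF⟩, hx0⟩ := (Submodule.ne_bot_iff _).mp hSF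
  exact ⟨(‖x‖⁻¹ : 𝕜) • x, S.smul_mem _ hxS, Fᗮ.smul_mem _ hxF, norm_smul_inv_norm hx0⟩

theorem exists_orthonormal_nat_forall_mem (S : ℕ → Submodule 𝕜 E)
    (hS : ∀ n, ¬ FiniteDimensional 𝕜 (S n)) :
    ∃ v : ℕ → E, Orthonormal 𝕜 v ∧ ∀ n, v n ∈ S n := by
  classical
  choose pick hpickS hpickF hpick1 using
    fun n (s : Finset E) => exists_mem_orthogonal_norm_eq_one (hS n) (span 𝕜 (s : Set E))
  -- `chosen n` is the set `{v 0, …, v (n - 1)}` of the vectors chosen before step `n`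
  let chosen : ℕ → Finset E := fun n => Nat.rec ∅ (fun k t => insert (pick k t) t) n
  let v : ℕ → E := fun n => pick n (chosen n)
  have hchosen : ∀ {m n}, m < n → v m ∈ chosen n := by
    intro m n hmn
    induction n with
    | zero => exact absurd hmn (Nat.not_lt_zero m)
    | succ n ih =>
      rcases Nat.lt_succ_iff_lt_or_eq.mp hmn with hmn | rfl
      · exact Finset.mem_insert_of_mem (ih hmn)
      · exact Finset.mem_insert_self _ _
  have horth : ∀ {m n}, m < n → ⟪v m, v n⟫_𝕜 = 0 := fun {m n} hmn =>
    (mem_orthogonal _ _).mp (hpickF n (chosen n)) _ (subset_span (hchosen hmn))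
  refine ⟨v, ⟨fun n => hpick1 n _, fun m n hmn => ?_⟩, fun n => hpickS n _⟩
  rcases hmn.lt_or_gt with hmn | hmn
  · exact horth hmn
  · exact inner_eq_zero_symm.mp (horth hmn)

theorem exists_orthonormal_forall_mem {ι : Type*} [Countable ι] [Nonempty ι]
    (S : ι → Submodule 𝕜 E) (hS : ∀ i, ¬ FiniteDimensional 𝕜 (S i)) :
    ∃ v : ι → E, Orthonormal 𝕜 v ∧ ∀ i, v i ∈ S i := by
  obtain ⟨f, hf⟩ := Countable.exists_injective_nat ι
  obtain ⟨v, hv, hvS⟩ := exists_orthonormal_nat_forall_mem (S ∘ Function.invFun f) fun n => hS _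
  refine ⟨v ∘ f, hv.comp f hf, fun i => ?_⟩
  simpa only [Function.comp_apply, Function.leftInverse_invFun hf i] using hvS (f i)

end InnerProductSpace

theorem inGinf_inf {H : Type} [NormedAddCommGroup H] [InnerProductSpace ℂ H]
    {X Z : Submodule ℂ H} (hX : inGinf X) (hZ : IsClosed (Z : Set H))
    (hXZ : ¬ FiniteDimensional ℂ (X ⊓ Z : Submodule ℂ H)) : inGinf (X ⊓ Z) :=
  ⟨by rw [coe_inf]; exact hX.1.inter hZ, hXZ,
    fun _ => hX.2.2 (finiteDimensional_of_le (orthogonal_le (inf_le_left : X ⊓ Z ≤ X)))⟩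

theorem stmt17_general
    (X Y : Submodule ℂ H) (hX : inGinf X) (hY : inGinf Y) :
    ∃ Z : Submodule ℂ H, inGinf Z ∧ inGinf (X ⊓ Z) ∧ inGinf (Y ⊓ Z) := by
  obtain ⟨v, hv, hvS⟩ := exists_orthonormal_forall_mem (fun p : Fin 3 × ℕ => ![X, Y, Xᗮ] p.1)
    fun ⟨i, _⟩ => by fin_cases i; exacts [hX.2.1, hY.2.1, hX.2.2]
  set Z := (span ℂ (v '' {p | p.1 = 2}))ᗮ
  have hvZ : ∀ i n, i ≠ 2 → v (i, n) ∈ Z := fun _ _ hi => hv.mem_orthogonal_span_image hi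
  have hrow : ∀ i, LinearIndependent ℂ fun n => v (i, n) := fun i =>
    hv.linearIndependent.comp _ (Prod.mk_right_injective i)
  refine ⟨Z, ⟨isClosed_orthogonal _, ?_, ?_⟩, inGinf_inf hX (isClosed_orthogonal _) ?_,
    inGinf_inf hY (isClosed_orthogonal _) ?_⟩
  · exact not_finiteDimensional_of_linearIndependent_mem (hrow 0) fun n => hvZ 0 n (by decide)
  · exact not_finiteDimensional_of_linearIndependent_mem (hrow 2) fun n =>
      le_orthogonal_orthogonal _ (subset_span ⟨(2, n), rfl, rfl⟩)
  · exact not_finiteDimensional_of_linearIndependent_mem (hrow 0) fun n =>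
      ⟨hvS (0, n), hvZ 0 n (by decide)⟩
  · exact not_finiteDimensional_of_linearIndependent_mem (hrow 1) fun n =>
      ⟨hvS (1, n), hvZ 1 n (by decide)⟩

/-- if `X, Y ∈ G_∞(H)` and `X ⊓ Y` is finite-dimensional, then there
exists `Z ∈ G_∞(H)` such that `X ⊓ Z` and `Y ⊓ Z` both belong to `G_∞(H)`. -/
theorem stmt17 (hH : ¬ FiniteDimensional ℂ H)
    (X Y : Submodule ℂ H) (hX : inGinf X) (hY : inGinf Y)
    (hXY : FiniteDimensional ℂ (X ⊓ Y : Submodule ℂ H)) :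
    ∃ Z : Submodule ℂ H, inGinf Z ∧ inGinf (X ⊓ Z) ∧ inGinf (Y ⊓ Z) :=
  stmt17_general X Y hX hY
end
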